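/- arXiv:2502.15338 — 4 statements merged into one kernel-verified Lean document; each statement's English description precedes it below -/
import Mathlib

section
/- Let N ≥ 1 be a natural number and let c : ℕ → Fin N → ℕ be a family of counters such that c 0 j = 0 for every j, c (t+1) j ≥ c t j for every t and j, and for every t there exists an index a_t ∈ Fin N with c t a_t = min_{j} c t j and c (t+1) a_t = c t a_t + 1 (i.e., at every step some counter of currently minimal value is incremented, and no counter decreases). Then for every t ∈ ℕ and every j ∈ Fin N, (c t j : ℝ) ≥ t / N − 1. -/
/-- Abstract combinatorial content of Lemma 3: if at every step some counter of
currently minimal value is incremented and no counter decreases, then after `t`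
steps every counter is at least `t / N - 1`. -/
theorem stmt_0 (N : ℕ) (hN : 1 ≤ N) (c : ℕ → Fin N → ℕ)
    (h0 : ∀ j : Fin N, c 0 j = 0)
    (hmono : ∀ (t : ℕ) (j : Fin N), c t j ≤ c (t + 1) j)
    (hstep : ∀ t : ℕ, ∃ a : Fin N,
      (∀ j : Fin N, c t a ≤ c t j) ∧ c (t + 1) a = c t a + 1) :
    ∀ (t : ℕ) (j : Fin N), (c t j : ℝ) ≥ (t : ℝ) / (N : ℝ) - 1 := by
  classical
  obtain ⟨a, ha⟩ : ∃ a : ℕ → Fin N,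
      ∀ t, (∀ j, c t (a t) ≤ c t j) ∧ c (t + 1) (a t) = c t (a t) + 1 :=
    ⟨fun t => (hstep t).choose, fun t => (hstep t).choose_spec⟩
  set m : ℕ → ℕ := fun t => c t (a t) with hm
  set A : ℕ → Finset (Fin N) := fun t => Finset.univ.filter (fun j => m t < c t j) with hA
  have hAcard : ∀ t, (A t).card + 1 ≤ N := by
    intro t
    have hanot : a t ∉ A t := by simp [hA, hm]
    have : (insert (a t) (A t)).card ≤ N := by
      simpa using Finset.card_le_card (Finset.subset_univ (insert (a t) (A t)))
    rwa [Finset.card_insert_of_notMem hanot] at this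
  have key : ∀ t, t ≤ N * m t + (A t).card := by
    intro t
    induction t with
    | zero => simp
    | succ t ih =>
      have hmin := (ha t).1
      have hinc := (ha t).2
      have hm' : m t ≤ m (t + 1) := le_trans (hmin (a (t + 1))) (hmono t _)
      rcases eq_or_lt_of_le hm' with heq | hlt
      · -- min unchanged: A grows by at least one
        have hsub : insert (a t) (A t) ⊆ A (t + 1) := by
          intro j hj
          rcases Finset.mem_insert.mp hj with rfl | hj
          · simp only [hA, Finset.mem_filter, Finset.mem_univ, true_and]
            rw [← heq, hinc]
            exact Nat.lt_succ_of_le (hmin (a t))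
          · simp only [hA, Finset.mem_filter, Finset.mem_univ, true_and] at hj ⊢
            calc m (t + 1) = m t := heq.symm
              _ < c t j := hj
              _ ≤ c (t + 1) j := hmono t j
        have hanot : a t ∉ A t := by simp [hA, hm]
        have hc : (A t).card + 1 ≤ (A (t + 1)).card := by
          have := Finset.card_le_card hsub
          rwa [Finset.card_insert_of_notMem hanot] at this
        calc t + 1 ≤ N * m t + (A t).card + 1 := Nat.add_le_add_right ih 1
          _ = N * m (t + 1) + ((A t).card + 1) := by rw [heq]; ring
          _ ≤ N * m (t + 1) + (A (t + 1)).card := by omega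
      · -- min increased
        have h1 : N * (m t + 1) ≤ N * m (t + 1) := Nat.mul_le_mul_left _ hlt
        have h2 := hAcard t
        calc t + 1 ≤ N * m t + (A t).card + 1 := Nat.add_le_add_right ih 1
          _ ≤ N * m t + N := by omega
          _ = N * (m t + 1) := by ring
          _ ≤ N * m (t + 1) := h1
          _ ≤ N * m (t + 1) + (A (t + 1)).card := Nat.le_add_right _ _
  intro t j
  have h1 : m t ≤ c t j := (ha t).1 j
  have h2 : t ≤ N * c t j + N := by
    have := key t
    have := hAcard t
    nlinarith
  have hNpos : (0 : ℝ) < (N : ℝ) := by exact_mod_cast hN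
  rw [ge_iff_le, sub_le_iff_le_add, div_le_iff₀ hNpos]
  have : (t : ℝ) ≤ (N : ℝ) * (c t j) + N := by exact_mod_cast h2
  nlinarith
end

section
/- For every real number Δ with 0 < Δ ≤ 1, every natural number N ≥ 1, and every natural number T, the finite sum ∑_{t=1}^{T} 2·exp(−((t : ℝ)/N − 1)·Δ²/2) is at most 4·e·N/Δ². -/
open Real Finset

/-- The summation estimate from the proof of Lemma 4: for `0 < Δ ≤ 1` and `N ≥ 1`,
`∑_{t=1}^{T} 2·exp(−(t/N − 1)·Δ²/2) ≤ 4·e·N/Δ²`. -/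
theorem stmt_1 (Δ : ℝ) (hΔ0 : 0 < Δ) (hΔ1 : Δ ≤ 1) (N : ℕ) (hN : 1 ≤ N) (T : ℕ) :
    ∑ t ∈ Finset.Icc 1 T, 2 * Real.exp (-((t : ℝ) / (N : ℝ) - 1) * Δ ^ 2 / 2)
      ≤ 4 * Real.exp 1 * (N : ℝ) / Δ ^ 2 := by
  have hN0 : (0:ℝ) < N := by exact_mod_cast hN
  have hN1 : (1:ℝ) ≤ N := by exact_mod_cast hN
  set x : ℝ := Δ ^ 2 / (2 * N) with hxdef
  have hx0 : 0 < x := by positivity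
  have hΔsq : Δ ^ 2 ≤ 1 := by nlinarith
  have hx_le : x ≤ 1 / 2 := by
    rw [hxdef, div_le_iff₀ (by positivity)]
    nlinarith
  have hr1 : Real.exp (-x) < 1 := Real.exp_lt_one_iff.mpr (by linarith)
  have hr0 : 0 < Real.exp (-x) := Real.exp_pos _
  have hterm : ∀ t ∈ Finset.Icc 1 T,
      2 * Real.exp (-((t : ℝ) / (N : ℝ) - 1) * Δ ^ 2 / 2)
      = 2 * Real.exp (Δ ^ 2 / 2) * Real.exp (-x) ^ t := by
    intro t _
    rw [← Real.exp_nat_mul, mul_assoc, ← Real.exp_add]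
    congr 1
    rw [Real.exp_eq_exp, hxdef]
    field_simp
    ring
  rw [Finset.sum_congr rfl hterm, ← Finset.mul_sum]
  have hkey : 1 - Real.exp (-x) ≥ x * Real.exp (-x) := by
    have h := Real.add_one_le_exp x
    have h2 : (x + 1) * Real.exp (-x) ≤ Real.exp x * Real.exp (-x) := by
      apply mul_le_mul_of_nonneg_right h hr0.le
    rw [← Real.exp_add, add_neg_cancel, Real.exp_zero] at h2
    nlinarith
  have hsum : ∑ t ∈ Finset.Icc 1 T, Real.exp (-x) ^ t ≤ 1 / (1 - Real.exp (-x)) := by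
    calc ∑ t ∈ Finset.Icc 1 T, Real.exp (-x) ^ t
        ≤ ∑ t ∈ Finset.range (T + 1), Real.exp (-x) ^ t := by
          apply Finset.sum_le_sum_of_subset_of_nonneg
          · intro t ht
            simp only [Finset.mem_Icc] at ht
            simp only [Finset.mem_range]
            omega
          · intros
            positivity
      _ ≤ 1 / (1 - Real.exp (-x)) := by
          rw [geom_sum_eq hr1.ne]
          have hpow : 0 ≤ Real.exp (-x) ^ (T + 1) := by positivity
          have h1r : 0 < 1 - Real.exp (-x) := by linarith
          have heq : (Real.exp (-x) ^ (T + 1) - 1) / (Real.exp (-x) - 1)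
              = (1 - Real.exp (-x) ^ (T + 1)) / (1 - Real.exp (-x)) := by
            rw [← neg_div_neg_eq]
            ring_nf
          rw [heq]
          gcongr
          linarith
  have h1r : 0 < 1 - Real.exp (-x) := by linarith
  have hsum2 : 1 / (1 - Real.exp (-x)) ≤ Real.exp x / x := by
    rw [div_le_div_iff₀ h1r hx0]
    calc 1 * x = x * Real.exp (-x) * Real.exp x := by
          rw [mul_assoc, ← Real.exp_add, neg_add_cancel, Real.exp_zero]; ring
      _ ≤ (1 - Real.exp (-x)) * Real.exp x := by
          apply mul_le_mul_of_nonneg_right hkey (Real.exp_pos x).le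
      _ = Real.exp x * (1 - Real.exp (-x)) := by ring
  have hS : ∑ t ∈ Finset.Icc 1 T, Real.exp (-x) ^ t ≤ Real.exp x / x :=
    hsum.trans hsum2
  have hSnn : 0 ≤ ∑ t ∈ Finset.Icc 1 T, Real.exp (-x) ^ t :=
    Finset.sum_nonneg fun _ _ => by positivity
  calc 2 * Real.exp (Δ ^ 2 / 2) * ∑ t ∈ Finset.Icc 1 T, Real.exp (-x) ^ t
      ≤ 2 * Real.exp (Δ ^ 2 / 2) * (Real.exp x / x) := by
        apply mul_le_mul_of_nonneg_left hS (by positivity)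
    _ = 2 * Real.exp (Δ ^ 2 / 2 + x) * (2 * N / Δ ^ 2) := by
        rw [Real.exp_add, hxdef]
        field_simp
    _ ≤ 2 * Real.exp 1 * (2 * N / Δ ^ 2) := by
        apply mul_le_mul_of_nonneg_right _ (by positivity)
        have : Δ ^ 2 / 2 + x ≤ 1 := by
          have : Δ ^ 2 / 2 ≤ 1 / 2 := by linarith
          linarith
        have := Real.exp_le_exp.mpr this
        linarith
    _ = 4 * Real.exp 1 * (N : ℝ) / Δ ^ 2 := by
        field_simp
        ring
end

section
/- Let T > 1 be a real number, B ≥ 1 a real number, and let μ₁ > μᵢ be real numbers with gap Δ = μ₁ − μᵢ. Let n₁, nᵢ be positive real numbers with nᵢ ≥ 8(1+√B)²·log T/Δ² and n₁ ≥ nᵢ/B. Suppose μ̂₁ and μ̂ᵢ are real numbers satisfying |μ̂₁ − μ₁| ≤ √(3·log T/(2n₁)) and |μ̂ᵢ − μᵢ| ≤ √(3·log T/(2nᵢ)). Then μ̂ᵢ + √(2·log T/nᵢ) ≤ μ̂₁ − √(2·log T/n₁). -/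
open Real

/-- Core deterministic implication in the proof of Lemma 2: under the concentration
event, once a sub-optimal arm `i` has been sampled `nᵢ ≥ 8(1+√B)² log T/Δ²` times with
balance condition `n₁ ≥ nᵢ/B`, the elimination rule fires. -/
theorem stmt_2 (T B μ₁ μᵢ n₁ nᵢ m₁ mᵢ : ℝ)
    (hT : 1 < T) (hB : 1 ≤ B) (hμ : μᵢ < μ₁)
    (hn₁ : 0 < n₁) (hnᵢ : 0 < nᵢ)
    (hnᵢbig : nᵢ ≥ 8 * (1 + Real.sqrt B) ^ 2 * Real.log T / (μ₁ - μᵢ) ^ 2)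
    (hbal : n₁ ≥ nᵢ / B)
    (hconc₁ : |m₁ - μ₁| ≤ Real.sqrt (3 * Real.log T / (2 * n₁)))
    (hconcᵢ : |mᵢ - μᵢ| ≤ Real.sqrt (3 * Real.log T / (2 * nᵢ))) :
    mᵢ + Real.sqrt (2 * Real.log T / nᵢ) ≤ m₁ - Real.sqrt (2 * Real.log T / n₁) := by
  have hL : 0 < Real.log T := Real.log_pos hT
  have hΔ : 0 < μ₁ - μᵢ := by linarith
  have hsB : 1 ≤ Real.sqrt B := by
    rw [show (1:ℝ) = Real.sqrt 1 by simp]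
    exact Real.sqrt_le_sqrt hB
  have hsB0 : (0:ℝ) < 1 + Real.sqrt B := by linarith
  set rᵢ := Real.sqrt (2 * Real.log T / nᵢ) with hri
  set r₁ := Real.sqrt (2 * Real.log T / n₁) with hr1
  -- bound rᵢ
  have hriB : rᵢ ≤ (μ₁ - μᵢ) / (2 * (1 + Real.sqrt B)) := by
    have h1 : 2 * Real.log T / nᵢ ≤ ((μ₁ - μᵢ) / (2 * (1 + Real.sqrt B))) ^ 2 := by
      rw [div_pow, div_le_div_iff₀ hnᵢ (by positivity)]
      have h2 : 8 * (1 + Real.sqrt B) ^ 2 * Real.log T / (μ₁ - μᵢ) ^ 2 ≤ nᵢ := hnᵢbig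
      rw [div_le_iff₀ (by positivity)] at h2
      nlinarith [sq_nonneg (1 + Real.sqrt B), sq_nonneg (μ₁ - μᵢ)]
    calc rᵢ ≤ Real.sqrt (((μ₁ - μᵢ) / (2 * (1 + Real.sqrt B))) ^ 2) :=
          Real.sqrt_le_sqrt h1
      _ = (μ₁ - μᵢ) / (2 * (1 + Real.sqrt B)) := Real.sqrt_sq (by positivity)
  -- bound r₁ ≤ √B * rᵢ
  have hr1B : r₁ ≤ Real.sqrt B * rᵢ := by
    have hBpos : (0:ℝ) < B := by linarith
    have h1 : 2 * Real.log T / n₁ ≤ B * (2 * Real.log T / nᵢ) := by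
      rw [div_le_iff₀ hn₁]
      have h2 : nᵢ / B ≤ n₁ := hbal
      rw [div_le_iff₀ hBpos] at h2
      rw [mul_div_assoc', div_mul_eq_mul_div, le_div_iff₀ hnᵢ]
      nlinarith
    calc r₁ ≤ Real.sqrt (B * (2 * Real.log T / nᵢ)) := Real.sqrt_le_sqrt h1
      _ = Real.sqrt B * rᵢ := Real.sqrt_mul hBpos.le _
  -- concentration radii ≤ elimination radii
  have hc₁ : Real.sqrt (3 * Real.log T / (2 * n₁)) ≤ r₁ := by
    apply Real.sqrt_le_sqrt
    rw [div_le_div_iff₀ (by positivity) hn₁]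
    nlinarith
  have hcᵢ : Real.sqrt (3 * Real.log T / (2 * nᵢ)) ≤ rᵢ := by
    apply Real.sqrt_le_sqrt
    rw [div_le_div_iff₀ (by positivity) hnᵢ]
    nlinarith
  have h1 := abs_le.mp hconc₁
  have h2 := abs_le.mp hconcᵢ
  -- combine: 2rᵢ + 2r₁ ≤ Δ
  have hsum : 2 * rᵢ + 2 * r₁ ≤ μ₁ - μᵢ := by
    have : 2 * r₁ ≤ 2 * Real.sqrt B * rᵢ := by nlinarith [Real.sqrt_nonneg B]
    have hri2 : rᵢ * (2 * (1 + Real.sqrt B)) ≤ μ₁ - μᵢ := by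
      rw [← le_div_iff₀ (by positivity)]
      exact hriB
    nlinarith
  linarith
end

section
/- Let T > 1 and B ≥ 1 be real numbers and Δ > 0 a real number. If nᵢ and n₁ are positive reals with nᵢ ≥ 8(1+√B)²·log T/Δ² and n₁ ≥ nᵢ/B, then 2·√(2·log T/n₁) + 2·√(2·log T/nᵢ) ≤ Δ. -/
open Real

/-- Confidence-radius computation inside the proof of Lemma 2: once
`nᵢ ≥ 8(1+√B)² log T/Δ²` and `n₁ ≥ nᵢ/B`, twice the two confidence radii sum
to at most the gap `Δ`. -/
theorem stmt_3 (T B Δ nᵢ n₁ : ℝ)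
    (hT : 1 < T) (hB : 1 ≤ B) (hΔ : 0 < Δ)
    (hnᵢ : 0 < nᵢ) (hn₁ : 0 < n₁)
    (hnᵢbig : nᵢ ≥ 8 * (1 + Real.sqrt B) ^ 2 * Real.log T / Δ ^ 2)
    (hbal : n₁ ≥ nᵢ / B) :
    2 * Real.sqrt (2 * Real.log T / n₁) + 2 * Real.sqrt (2 * Real.log T / nᵢ) ≤ Δ := by
  have hL : 0 < Real.log T := Real.log_pos hT
  set L := Real.log T with hLdef
  have hB0 : (0:ℝ) < B := by linarith
  have hs : 1 ≤ Real.sqrt B := by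
    rw [show (1:ℝ) = Real.sqrt 1 by simp]
    exact Real.sqrt_le_sqrt hB
  set s := Real.sqrt B with hsdef
  have hsB : s ^ 2 = B := Real.sq_sqrt hB0.le
  have hs0 : (0:ℝ) < 1 + s := by linarith
  have h1 : 8 * (1 + s) ^ 2 * L ≤ nᵢ * Δ ^ 2 :=
    (div_le_iff₀ (by positivity)).mp hnᵢbig
  have h2 : nᵢ ≤ n₁ * B := (div_le_iff₀ hB0).mp hbal
  have hb : Real.sqrt (2 * L / nᵢ) ≤ Δ / (2 * (1 + s)) := by
    rw [show Δ / (2 * (1 + s)) = Real.sqrt ((Δ / (2 * (1 + s))) ^ 2) from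
      (Real.sqrt_sq (by positivity)).symm]
    apply Real.sqrt_le_sqrt
    rw [div_pow, div_le_div_iff₀ hnᵢ (by positivity)]
    nlinarith
  have ha : Real.sqrt (2 * L / n₁) ≤ s * Δ / (2 * (1 + s)) := by
    rw [show s * Δ / (2 * (1 + s)) = Real.sqrt ((s * Δ / (2 * (1 + s))) ^ 2) from
      (Real.sqrt_sq (by positivity)).symm]
    apply Real.sqrt_le_sqrt
    rw [div_pow, div_le_div_iff₀ hn₁ (by positivity)]
    have hc : (s * Δ) ^ 2 * n₁ = Δ ^ 2 * (n₁ * B) := by rw [mul_pow, hsB]; ring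
    have he : 2 * L * (2 * (1 + s)) ^ 2 = 8 * (1 + s) ^ 2 * L := by ring
    linarith [hc, he, h1, mul_le_mul_of_nonneg_left h2 (sq_nonneg Δ)]
  have hfin : 2 * (s * Δ / (2 * (1 + s))) + 2 * (Δ / (2 * (1 + s))) = Δ := by
    field_simp
    ring
  linarith
end
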